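/- arXiv:1912.05379 — 4 statements merged into one kernel-verified Lean document; each statement's English description precedes it below -/
import Mathlib

section
/- Let ε ≥ δ > 0, let A ⊆ ℝⁿ, and let S be an (ε,δ)-Delone set in ℝⁿ. Then there exists a subset S' ⊆ A that is δ-separated and ε-relatively dense in A (with the induced metric), and such that S' ∩ A_ε = S ∩ A_ε, where A_ε = {x ∈ ℝⁿ : the closed ball of radius ε around x is contained in A}. -/
/-!
Extend `S ∩ A` by Zorn's lemma to a maximal `δ`-separated subset `M` of
`(S ∩ A) ∪ (A \ A_ε)`. A point `x ∈ A_ε` has a point of `S` within `ε`, and that point lies in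
`closedBall x ε ⊆ A`, hence in `S ∩ A ⊆ M`. A point `x ∈ A \ A_ε` is a candidate for `M`, so by
maximality it lies within `δ ≤ ε` of `M`. Since `M` meets `A_ε` only in points of `S ∩ A`, it agrees
with `S` on `A_ε`.
-/

open Metric

def IsSeparated' {X : Type*} [MetricSpace X] (δ : ℝ) (S : Set X) : Prop :=
  ∀ x ∈ S, ∀ y ∈ S, x ≠ y → δ ≤ dist x y

/-- `S` is `ε`-relatively dense in the subset `A`. -/
def IsRelDenseIn {X : Type*} [MetricSpace X] (ε : ℝ) (A S : Set X) : Prop :=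
  ∀ x ∈ A, ∃ y ∈ S, dist x y ≤ ε

/-- `S` is an `(ε,δ)`-Delone set of the whole space. -/
def IsDelone {X : Type*} [MetricSpace X] (ε δ : ℝ) (S : Set X) : Prop :=
  (∀ x : X, ∃ y ∈ S, dist x y ≤ ε) ∧ IsSeparated' δ S

open Set

section Separated

variable {X : Type*} [MetricSpace X] {δ : ℝ}

theorem isSeparated'_iff_pairwise {S : Set X} :
    IsSeparated' δ S ↔ S.Pairwise fun x y => δ ≤ dist x y :=
  Iff.rfl

theorem IsSeparated'.mono {S T : Set X} (hS : IsSeparated' δ S) (hTS : T ⊆ S) :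
    IsSeparated' δ T :=
  Set.Pairwise.mono hTS hS

theorem exists_maximal_isSeparated'_of_subset {T P : Set X} (hTP : T ⊆ P)
    (hT : IsSeparated' δ T) :
    ∃ M, T ⊆ M ∧ Maximal (fun M => M ⊆ P ∧ IsSeparated' δ M) M := by
  refine zorn_subset_nonempty {M | M ⊆ P ∧ IsSeparated' δ M} ?_ T ⟨hTP, hT⟩
  intro c hc hchain _
  refine ⟨⋃₀ c, ⟨sUnion_subset fun M hM => (hc hM).1, ?_⟩, fun M hM => subset_sUnion_of_mem hM⟩
  rw [isSeparated'_iff_pairwise, pairwise_sUnion hchain.directedOn]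
  exact fun M hM => (hc hM).2

theorem mem_or_exists_dist_lt_of_maximal_isSeparated' {P M : Set X}
    (hM : Maximal (fun M => M ⊆ P ∧ IsSeparated' δ M) M) {x : X} (hx : x ∈ P) :
    x ∈ M ∨ ∃ y ∈ M, dist x y < δ := by
  by_contra! hfar
  have hxM : IsSeparated' δ (insert x M) := by
    rw [isSeparated'_iff_pairwise, pairwise_insert]
    exact ⟨hM.prop.2, fun y hy _ => ⟨hfar.2 y hy, dist_comm x y ▸ hfar.2 y hy⟩⟩
  exact hfar.1 (hM.2 ⟨insert_subset hx hM.prop.1, hxM⟩ (subset_insert x M) (mem_insert x M))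

end Separated

theorem delone_restrict_general (n : ℕ) (ε δ : ℝ) (hεδ : δ ≤ ε)
    (A S : Set (EuclideanSpace ℝ (Fin n))) (hS : IsDelone ε δ S) :
    ∃ S' : Set (EuclideanSpace ℝ (Fin n)), S' ⊆ A ∧ IsSeparated' δ S' ∧
      IsRelDenseIn ε A S' ∧
      S' ∩ {x | closedBall x ε ⊆ A} = S ∩ {x | closedBall x ε ⊆ A} := by
  set Aε := {x | closedBall x ε ⊆ A}
  have hε : 0 ≤ ε := by
    obtain ⟨y, -, hy⟩ := hS.1 0
    exact dist_nonneg.trans hy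
  obtain ⟨M, hSAM, hM⟩ := exists_maximal_isSeparated'_of_subset
    (subset_union_left (t := A \ Aε)) (hS.2.mono inter_subset_left)
  have hMA : M ⊆ A := hM.prop.1.trans (union_subset inter_subset_right sdiff_subset)
  refine ⟨M, hMA, hM.prop.2, fun x hxA => ?_, ?_⟩
  · by_cases hx : x ∈ Aε
    · obtain ⟨y, hyS, hxy⟩ := hS.1 x
      exact ⟨y, hSAM ⟨hyS, hx (mem_closedBall_comm.1 hxy)⟩, hxy⟩
    · rcases mem_or_exists_dist_lt_of_maximal_isSeparated' hM (Or.inr ⟨hxA, hx⟩) with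
        hxM | ⟨y, hyM, hxy⟩
      · exact ⟨x, hxM, (dist_self x).trans_le hε⟩
      · exact ⟨y, hyM, hxy.le.trans hεδ⟩
  · ext z
    refine ⟨fun ⟨hzM, hz⟩ => ⟨?_, hz⟩,
      fun ⟨hzS, hz⟩ => ⟨hSAM ⟨hzS, hz (mem_closedBall_self hε)⟩, hz⟩⟩
    rcases hM.prop.1 hzM with hzSA | hzA
    · exact hzSA.1
    · exact absurd hz hzA.2

theorem delone_restrict (n : ℕ) (ε δ : ℝ) (hδ : 0 < δ) (hεδ : δ ≤ ε)
    (A S : Set (EuclideanSpace ℝ (Fin n))) (hS : IsDelone ε δ S) :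
    ∃ S' : Set (EuclideanSpace ℝ (Fin n)), S' ⊆ A ∧ IsSeparated' δ S' ∧
      IsRelDenseIn ε A S' ∧
      S' ∩ {x | closedBall x ε ⊆ A} = S ∩ {x | closedBall x ε ⊆ A} :=
  delone_restrict_general n ε δ hεδ A S hS
end

section
/- Let ε ≥ δ > 0 and let A ⊆ ℝⁿ. For any subset N ⊆ A that is δ-separated and ε-relatively dense in A, there exists an (ε,δ)-Delone set S of ℝⁿ with S ∩ A = N. -/
/-! By Zorn's lemma, enlarge `N` to a maximal δ-separated set `M` that meets `A` only in `N`.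
Every point of `A` is within `ε` of `N ⊆ M`. A point `x ∉ A` farther than `ε ≥ δ` from all of `M`
could be added to `M`, contradicting maximality; so `M` is `ε`-relatively dense everywhere. -/

open Metric

section

variable {X : Type*} [MetricSpace X] {ε δ : ℝ}

theorem IsSeparated'.insert {S : Set X} {x : X} (hS : IsSeparated' δ S)
    (hx : ∀ y ∈ S, δ ≤ dist x y) : IsSeparated' δ (insert x S) := by
  rintro a (rfl | ha) b (rfl | hb) hab
  · exact absurd rfl hab
  · exact hx b hb
  · exact dist_comm a b ▸ hx a ha
  · exact hS a ha b hb hab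

theorem IsSeparated'.sUnion_of_isChain {c : Set (Set X)} (hc : IsChain (· ⊆ ·) c)
    (hsep : ∀ s ∈ c, IsSeparated' δ s) : IsSeparated' δ (⋃₀ c) := by
  rintro x ⟨s, hs, hxs⟩ y ⟨t, ht, hyt⟩ hxy
  rcases hc.total hs ht with hst | hts
  · exact hsep t ht x (hst hxs) y hyt hxy
  · exact hsep s hs x hxs y (hts hyt) hxy

def separatedExtensions (δ : ℝ) (A N : Set X) : Set (Set X) :=
  {S | N ⊆ S ∧ IsSeparated' δ S ∧ S ∩ A ⊆ N}

theorem exists_maximal_separatedExtensions {A N : Set X} (hsep : IsSeparated' δ N) :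
    ∃ M, Maximal (· ∈ separatedExtensions δ A N) M := by
  obtain ⟨M, -, hM⟩ := zorn_subset_nonempty (separatedExtensions δ A N)
    (fun c hcF hc ⟨s, hs⟩ ↦ ⟨⋃₀ c,
      ⟨(hcF hs).1.trans (Set.subset_sUnion_of_mem hs),
        IsSeparated'.sUnion_of_isChain hc fun t ht ↦ (hcF ht).2.1,
        fun _ ⟨⟨t, ht, hxt⟩, hxA⟩ ↦ (hcF ht).2.2 ⟨hxt, hxA⟩⟩,
      fun _ ↦ Set.subset_sUnion_of_mem⟩)
    N ⟨subset_rfl, hsep, Set.inter_subset_left⟩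
  exact ⟨M, hM⟩

theorem exists_dist_le_of_maximal_separatedExtensions {A N M : Set X} (hε : 0 ≤ ε) (hεδ : δ ≤ ε)
    (hdense : IsRelDenseIn ε A N) (hM : Maximal (· ∈ separatedExtensions δ A N) M) (x : X) :
    ∃ y ∈ M, dist x y ≤ ε := by
  obtain ⟨hNM, hMsep, hMA⟩ := hM.prop
  by_contra! hfar
  have hxA : x ∉ A := fun hxA ↦ by
    obtain ⟨y, hyN, hxy⟩ := hdense x hxA
    exact (hfar y (hNM hyN)).not_ge hxy
  have hxM : x ∉ M := fun hxM ↦ by simpa using hε.trans_lt (hfar x hxM)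
  have hinsert : insert x M ∈ separatedExtensions δ A N :=
    ⟨hNM.trans (Set.subset_insert x M),
      hMsep.insert fun y hy ↦ hεδ.trans (hfar y hy).le,
      fun z ⟨hz, hzA⟩ ↦ hz.elim (fun hzx ↦ absurd (hzx ▸ hzA) hxA) fun hzM ↦ hMA ⟨hzM, hzA⟩⟩
  exact hxM (hM.eq_of_subset hinsert (Set.subset_insert x M) ▸ Set.mem_insert x M)

theorem exists_isDelone_inter_eq (hε : 0 ≤ ε) (hεδ : δ ≤ ε) {A N : Set X} (hNA : N ⊆ A)
    (hsep : IsSeparated' δ N) (hdense : IsRelDenseIn ε A N) :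
    ∃ S : Set X, IsDelone ε δ S ∧ S ∩ A = N := by
  obtain ⟨M, hM⟩ := exists_maximal_separatedExtensions (A := A) hsep
  obtain ⟨hNM, hMsep, hMA⟩ := hM.prop
  exact ⟨M, ⟨exists_dist_le_of_maximal_separatedExtensions hε hεδ hdense hM, hMsep⟩,
    hMA.antisymm fun x hx ↦ ⟨hNM hx, hNA hx⟩⟩

end

theorem delone_extend (n : ℕ) (ε δ : ℝ) (hδ : 0 < δ) (hεδ : δ ≤ ε)
    (A N : Set (EuclideanSpace ℝ (Fin n))) (hNA : N ⊆ A)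
    (hsep : IsSeparated' δ N) (hdense : IsRelDenseIn ε A N) :
    ∃ S : Set (EuclideanSpace ℝ (Fin n)), IsDelone ε δ S ∧ S ∩ A = N :=
  exists_isDelone_inter_eq (hδ.le.trans hεδ) hεδ hNA hsep hdense
end

section
/- Let S ⊆ ℝⁿ be locally finite (every bounded set contains finitely many points of S), let 0 < α, and let q ∈ ℝⁿ. Suppose there exists x ∈ S such that the closed ball of radius α centred at x − q is disjoint from S. Then there exists r > 0 such that every subset S' ⊆ ℝⁿ with (S, S') ∈ N_r also has a point y ∈ S' with the closed ball of radius α centred at y − q disjoint from S'. In other words, the set V_q of such sets is open in the local rubber topology. -/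
/-!
A locally finite set has only finitely many points near the empty ball `closedBall (x - q) α`,
so the ball can be enlarged to radius `α + ε` and stay empty. If `S'` is `N_r`-close to `S` with
`1/r ≤ ε/2` and `r` large, then `x` has a partner `y ∈ S'` within `ε/2`, and any point of `S'` in
`closedBall (y - q) α` would have a partner in `S` within `ε/2`, hence inside
`closedBall (x - q) (α + ε)`.
-/

open Metric Pointwise

/-- The entourage `N_r` on subsets of ℝⁿ for the local rubber topology. -/
def Nrel (n : ℕ) (r : ℝ) (S S' : Set (EuclideanSpace ℝ (Fin n))) : Prop :=
  S ∩ ball (0 : EuclideanSpace ℝ (Fin n)) r ⊆ S' + ball (0 : EuclideanSpace ℝ (Fin n)) (1 / r) ∧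
  S' ∩ ball (0 : EuclideanSpace ℝ (Fin n)) r ⊆ S + ball (0 : EuclideanSpace ℝ (Fin n)) (1 / r)

open Filter Topology

section PseudoMetric

variable {X : Type*} [PseudoMetricSpace X]

theorem exists_pos_closedBall_add_inter_eq_empty {S : Set X}
    (hS : ∀ B : Set X, Bornology.IsBounded B → (S ∩ B).Finite) {c : X} {α : ℝ}
    (h : closedBall c α ∩ S = ∅) : ∃ ε > 0, closedBall c (α + ε) ∩ S = ∅ := by
  set F := S ∩ closedBall c (α + 1)
  have hfar : ∀ s ∈ F, α < dist s c := fun s hs =>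
    not_le.1 fun hsc => h.subset ⟨mem_closedBall.2 hsc, hs.1⟩
  have hev : ∀ᶠ ε in 𝓝[>] (0 : ℝ), ε < 1 ∧ ∀ s ∈ F, α + ε < dist s c := by
    refine nhdsWithin_le_nhds ((eventually_lt_nhds one_pos).and ?_)
    refine (hS _ isBounded_closedBall).eventually_all.2 fun s hs => ?_
    filter_upwards [eventually_lt_nhds (sub_pos.2 (hfar s hs))] with ε hε
    linarith
  obtain ⟨ε, ⟨hε1, hεF⟩, hε0⟩ := (hev.and self_mem_nhdsWithin).exists
  refine ⟨ε, hε0, Set.eq_empty_of_forall_notMem ?_⟩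
  rintro s ⟨hsc, hsS⟩
  have hsF : s ∈ F := ⟨hsS, closedBall_subset_closedBall (by linarith) hsc⟩
  exact (mem_closedBall.1 hsc).not_gt (hεF s hsF)

theorem closedBall_inter_eq_empty_of_subset_thickening {S S' U : Set X} {c c' : X} {α δ : ℝ}
    (hS : closedBall c (α + 2 * δ) ∩ S = ∅) (hc : dist c' c < δ) (hU : closedBall c' α ⊆ U)
    (hS' : S' ∩ U ⊆ thickening δ S) : closedBall c' α ∩ S' = ∅ := by
  refine Set.eq_empty_of_forall_notMem ?_
  rintro z ⟨hz, hzS'⟩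
  obtain ⟨s, hsS, hzs⟩ := mem_thickening_iff.1 (hS' ⟨hzS', hU hz⟩)
  have hsc : dist s c ≤ α + 2 * δ := by
    have := mem_closedBall.1 hz
    linarith [dist_triangle s z c, dist_triangle z c' c, dist_comm s z]
  exact hS.subset ⟨mem_closedBall.2 hsc, hsS⟩

end PseudoMetric

theorem nrel_iff_subset_thickening {n : ℕ} {r : ℝ} {S S' : Set (EuclideanSpace ℝ (Fin n))} :
    Nrel n r S S' ↔ S ∩ ball 0 r ⊆ thickening (1 / r) S' ∧ S' ∩ ball 0 r ⊆ thickening (1 / r) S := by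
  simp only [Nrel, add_ball_zero]

theorem Vq_open_general (n : ℕ) (S : Set (EuclideanSpace ℝ (Fin n)))
    (hloc : ∀ B : Set (EuclideanSpace ℝ (Fin n)), Bornology.IsBounded B → (S ∩ B).Finite)
    (α : ℝ) (q : EuclideanSpace ℝ (Fin n))
    (hx : ∃ x ∈ S, closedBall (x - q) α ∩ S = ∅) :
    ∃ r : ℝ, 0 < r ∧ ∀ S' : Set (EuclideanSpace ℝ (Fin n)),
      Nrel n r S S' → ∃ y ∈ S', closedBall (y - q) α ∩ S' = ∅ := by
  obtain ⟨x, hxS, hxball⟩ := hx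
  obtain ⟨ε, hε, hεball⟩ := exists_pos_closedBall_add_inter_eq_empty hloc hxball
  set r := max (2 / ε) (‖x‖ + ‖q‖ + |α| + ε)
  have hr : 0 < r := lt_max_of_lt_left (by positivity)
  have hrε : 1 / r ≤ ε / 2 := by
    rw [div_le_div_iff₀ hr two_pos, one_mul, ← div_le_iff₀' hε]
    exact le_max_left _ _
  have hxr : ‖x‖ + ‖q‖ + |α| + ε ≤ r := le_max_right _ _
  refine ⟨r, hr, fun S' hS' => ?_⟩
  obtain ⟨hSS', hS'S⟩ := nrel_iff_subset_thickening.1 hS'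
  have hx0 : x ∈ ball 0 r := mem_ball_zero_iff.2 (by linarith [norm_nonneg q, abs_nonneg α])
  obtain ⟨y, hyS', hxy⟩ := mem_thickening_iff.1 (hSS' ⟨hxS, hx0⟩)
  refine ⟨y, hyS', closedBall_inter_eq_empty_of_subset_thickening (δ := ε / 2) (U := ball 0 r)
    (by rwa [mul_div_cancel₀ _ two_ne_zero]) ?_ (closedBall_subset_ball' ?_)
    (hS'S.trans (thickening_mono hrε S))⟩
  · rw [dist_sub_right, dist_comm]
    linarith
  · have hy : ‖y‖ ≤ ‖x‖ + dist x y := by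
      simpa [dist_eq_norm, norm_sub_rev] using norm_le_norm_add_norm_sub' y x
    rw [dist_zero_right]
    linarith [norm_sub_le y q, le_abs_self α]

theorem Vq_open (n : ℕ) (S : Set (EuclideanSpace ℝ (Fin n)))
    (hloc : ∀ B : Set (EuclideanSpace ℝ (Fin n)), Bornology.IsBounded B → (S ∩ B).Finite)
    (α : ℝ) (hα : 0 < α) (q : EuclideanSpace ℝ (Fin n))
    (hx : ∃ x ∈ S, closedBall (x - q) α ∩ S = ∅) :
    ∃ r : ℝ, 0 < r ∧ ∀ S' : Set (EuclideanSpace ℝ (Fin n)),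
      Nrel n r S S' → ∃ y ∈ S', closedBall (y - q) α ∩ S' = ∅ :=
  Vq_open_general n S hloc α q hx
end

section
/- Let ε ≥ δ > 0 and identify the n-torus 𝕋ⁿ = ℝⁿ/(2(m+δ+ε)ℤ)ⁿ with quotient map π : ℝⁿ → 𝕋ⁿ. If N ⊆ [−m−ε, m+ε]ⁿ is δ-separated and ε-relatively dense in [−m−ε, m+ε]ⁿ, then π(N) is δ-separated in 𝕋ⁿ (with the quotient flat metric) and ε-relatively dense in π([−m−ε, m+ε]ⁿ). -/
open Metric

/-- The lattice vector `L·k ∈ ℝⁿ` associated to `k ∈ ℤⁿ`. -/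
noncomputable def latVec (n : ℕ) (L : ℝ) (k : Fin n → ℤ) : EuclideanSpace ℝ (Fin n) :=
  (EuclideanSpace.equiv (Fin n) ℝ).symm (fun i => L * (k i : ℝ))

/-- The quotient (flat torus) distance on `ℝⁿ/(L·ℤ)ⁿ`, computed on representatives. -/
noncomputable def torusDist (n : ℕ) (L : ℝ) (x y : EuclideanSpace ℝ (Fin n)) : ℝ :=
  sInf {d : ℝ | ∃ k : Fin n → ℤ, d = dist x (y + latVec n L k)}

/-
Translating by a nonzero lattice vector moves some coordinate by at least `L`, while two points
of the cube `[-r, r]ⁿ` differ by at most `2r` in each coordinate; with `L = 2(m + δ + ε)` and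
`r = m + ε` every nontrivial translate is therefore at distance at least `2δ`, so the quotient
distance between points of `N` is realised by the untranslated pair.
-/

section TorusDist

variable {n : ℕ} {L : ℝ}

@[simp]
lemma latVec_apply (L : ℝ) (k : Fin n → ℤ) (i : Fin n) : latVec n L k i = L * k i := rfl

@[simp]
lemma latVec_zero (L : ℝ) : latVec n L 0 = 0 := by
  ext i
  simp

lemma torusDist_le_dist (x y : EuclideanSpace ℝ (Fin n)) : torusDist n L x y ≤ dist x y :=
  csInf_le ⟨0, by rintro d ⟨k, rfl⟩; exact dist_nonneg⟩ ⟨0, by simp⟩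

lemma le_torusDist {d : ℝ} {x y : EuclideanSpace ℝ (Fin n)}
    (h : ∀ k, d ≤ dist x (y + latVec n L k)) : d ≤ torusDist n L x y :=
  le_csInf ⟨_, 0, rfl⟩ (by rintro _ ⟨k, rfl⟩; exact h k)

lemma sub_two_mul_le_dist_add_latVec {r : ℝ} {x y : EuclideanSpace ℝ (Fin n)}
    (hx : ∀ i, |x i| ≤ r) (hy : ∀ i, |y i| ≤ r) {k : Fin n → ℤ} (hk : k ≠ 0) :
    L - 2 * r ≤ dist x (y + latVec n L k) := by
  obtain ⟨i, hi⟩ := Function.ne_iff.mp hk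
  have hLk : L ≤ |L * k i| := by
    rw [abs_mul]
    calc L ≤ |L| := le_abs_self L
      _ ≤ |L| * |(k i : ℝ)| :=
        le_mul_of_one_le_right (abs_nonneg L) (by exact_mod_cast Int.one_le_abs hi)
  have hxy : |x i - y i| ≤ 2 * r := (abs_sub _ _).trans (by linarith [hx i, hy i])
  calc L - 2 * r ≤ |L * k i| - |x i - y i| := by linarith
    _ ≤ |L * k i - (x i - y i)| := abs_sub_abs_le_abs_sub _ _
    _ = |x i - (y i + L * k i)| := by rw [abs_sub_comm]; ring_nf
    _ ≤ dist x (y + latVec n L k) := by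
      simpa [Real.dist_eq] using PiLp.dist_apply_le x (y + latVec n L k) i

end TorusDist

theorem torus_projection_general (n : ℕ) (ε δ m : ℝ) (hδ : 0 < δ)
    (N : Set (EuclideanSpace ℝ (Fin n)))
    (hNc : N ⊆ {x : EuclideanSpace ℝ (Fin n) | ∀ i, |x i| ≤ m + ε})
    (hsep : ∀ x ∈ N, ∀ y ∈ N, x ≠ y → δ ≤ dist x y)
    (hdense : ∀ x : EuclideanSpace ℝ (Fin n), (∀ i, |x i| ≤ m + ε) →
      ∃ y ∈ N, dist x y ≤ ε) :
    (∀ x ∈ N, ∀ y ∈ N,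
        (¬ ∃ k : Fin n → ℤ, y = x + latVec n (2 * (m + δ + ε)) k) →
        δ ≤ torusDist n (2 * (m + δ + ε)) x y) ∧
    (∀ x : EuclideanSpace ℝ (Fin n), (∀ i, |x i| ≤ m + ε) →
        ∃ y ∈ N, torusDist n (2 * (m + δ + ε)) x y ≤ ε) := by
  refine ⟨fun x hx y hy hxy => le_torusDist fun k => ?_, fun x hx => ?_⟩
  · rcases eq_or_ne k 0 with rfl | hk
    · rw [latVec_zero, add_zero]
      exact hsep x hx y hy fun h => hxy ⟨0, by simp [h]⟩
    · have := sub_two_mul_le_dist_add_latVec (L := 2 * (m + δ + ε)) (hNc hx) (hNc hy) hk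
      linarith
  · obtain ⟨y, hy, hxy⟩ := hdense x hx
    exact ⟨y, hy, (torusDist_le_dist x y).trans hxy⟩

/-- If `N ⊆ [−m−ε, m+ε]ⁿ` is `δ`-separated and `ε`-relatively dense in the cube, then its
projection to the torus `ℝⁿ/(2(m+δ+ε)ℤ)ⁿ` is `δ`-separated and `ε`-relatively dense in the
projection of the cube. -/
theorem torus_projection (n : ℕ) (ε δ m : ℝ) (hδ : 0 < δ) (hεδ : δ ≤ ε) (hm : 0 ≤ m)
    (N : Set (EuclideanSpace ℝ (Fin n)))
    (hNc : N ⊆ {x : EuclideanSpace ℝ (Fin n) | ∀ i, |x i| ≤ m + ε})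
    (hsep : ∀ x ∈ N, ∀ y ∈ N, x ≠ y → δ ≤ dist x y)
    (hdense : ∀ x : EuclideanSpace ℝ (Fin n), (∀ i, |x i| ≤ m + ε) →
      ∃ y ∈ N, dist x y ≤ ε) :
    (∀ x ∈ N, ∀ y ∈ N,
        (¬ ∃ k : Fin n → ℤ, y = x + latVec n (2 * (m + δ + ε)) k) →
        δ ≤ torusDist n (2 * (m + δ + ε)) x y) ∧
    (∀ x : EuclideanSpace ℝ (Fin n), (∀ i, |x i| ≤ m + ε) →
        ∃ y ∈ N, torusDist n (2 * (m + δ + ε)) x y ≤ ε) :=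
  torus_projection_general n ε δ m hδ N hNc hsep hdense
end
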